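/- arXiv:0806.1336 — 2 statements merged into one kernel-verified Lean document; each statement's English description precedes it below -/
import Mathlib

section
/- Let $\gamma(z) = \frac{az+b}{cz+d}$ with $ad-bc=1$ be an elliptic Möbius transformation whose fixed point set is $\{1, p\}$ with $p$ real. Then $|a| = 1$ if and only if $p = 0$. -/
/-!
Comparing coefficients in `c z² + (d - a) z - b = c (z - 1)(z - p)` gives `b = -c p` and
`d = a - c (1 + p)`, so the determinant condition becomes `u v = 1` for `u = a - c`,
`v = a - c p`, and the trace is `u + v`. Since `(u + v)²` is real in `[0, 4)`, `u + v` is real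
and `(u - v)² = (u + v)² - 4` is real and negative, so `u - v` is imaginary: `v = ū` and
`|u| = 1`, with `u` not real because `u ≠ v`. Now `a (p - 1) = u p - ū`, and
`|u p - ū|² = |u|² (p - 1)² + 4 p (Im u)²`, which equals `(p - 1)²` exactly when `p = 0`.
-/

open ComplexConjugate

namespace Complex

lemma im_eq_zero_of_sq_eq_ofReal_of_nonneg {z : ℂ} {t : ℝ} (h : z ^ 2 = t) (ht : 0 ≤ t) :
    z.im = 0 := by
  have hre : z.re ^ 2 - z.im ^ 2 = t := by simpa [sq] using congrArg re h
  have him : z.re * z.im = 0 := by simpa [sq, two_mul, mul_comm] using congrArg im h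
  rcases mul_eq_zero.mp him with h0 | h0
  · nlinarith [sq_nonneg z.im]
  · exact h0

lemma re_eq_zero_of_sq_eq_ofReal_of_neg {z : ℂ} {t : ℝ} (h : z ^ 2 = t) (ht : t < 0) :
    z.re = 0 := by
  have hre : z.re ^ 2 - z.im ^ 2 = t := by simpa [sq] using congrArg re h
  have him : z.re * z.im = 0 := by simpa [sq, two_mul, mul_comm] using congrArg im h
  rcases mul_eq_zero.mp him with h0 | h0
  · exact h0
  · nlinarith [sq_nonneg z.re]

lemma conj_eq_of_mul_eq_one_of_sq_add_eq_ofReal {u v : ℂ} {t : ℝ} (huv : u * v = 1)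
    (ht : (u + v) ^ 2 = t) (ht0 : 0 ≤ t) (ht4 : t < 4) : conj u = v := by
  have hsum : (u + v).im = 0 := im_eq_zero_of_sq_eq_ofReal_of_nonneg ht ht0
  have hdiff : (u - v) ^ 2 = ((t - 4 : ℝ) : ℂ) := by
    push_cast
    linear_combination ht - 4 * huv
  have hdiff_re : (u - v).re = 0 := re_eq_zero_of_sq_eq_ofReal_of_neg hdiff (by linarith)
  simp only [add_im, sub_re] at hsum hdiff_re
  apply ext <;> simp only [conj_re, conj_im] <;> linarith

lemma normSq_mul_ofReal_sub_conj (u : ℂ) (p : ℝ) :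
    normSq (u * p - conj u) = normSq u * (p - 1) ^ 2 + 4 * p * u.im ^ 2 := by
  simp only [normSq_apply, sub_re, sub_im, mul_re, mul_im, ofReal_re, ofReal_im, conj_re,
    conj_im]
  ring

end Complex

open Complex

/-- Lemma (elliptic fixed points): let `γ(z) = (a z + b)/(c z + d)` with `a d - b c = 1`
be an elliptic Möbius transformation (`tr² = (a+d)² ∈ [0,4)`) whose fixed point set is
`{1, p}` with `p` real (the fixed points are the roots of `c z² + (d - a) z - b = 0`).
Then `|a| = 1 ↔ p = 0`. -/
theorem elliptic_abs_eq_one_iff_fixed_point_zero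
    (a b c d : ℂ) (p : ℝ)
    (hdet : a * d - b * c = 1)
    (hc : c ≠ 0)
    (hne : (p : ℂ) ≠ 1)
    -- the fixed point equation `c z² + (d - a) z - b = 0` has root set `{1, p}`
    (hroots : ∀ z : ℂ, c * z ^ 2 + (d - a) * z - b = c * (z - 1) * (z - p))
    -- ellipticity: the square of the trace is a real number in `[0, 4)`
    (hell : ∃ t : ℝ, ((a + d) ^ 2 : ℂ) = (t : ℂ) ∧ 0 ≤ t ∧ t < 4) :
    ‖a‖ = 1 ↔ p = 0 := by
  obtain ⟨t, ht, ht0, ht4⟩ := hell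
  have hb : b = -(c * p) := by linear_combination -hroots 0
  have hd : d = a - c * (1 + p) := by linear_combination hroots 1 - hroots 0
  subst hb hd
  set u := a - c
  have hconj : conj u = a - c * p :=
    conj_eq_of_mul_eq_one_of_sq_add_eq_ofReal (by linear_combination hdet)
      (by linear_combination ht) ht0 ht4
  have hnormSq : normSq u = 1 := by
    have h : (normSq u : ℂ) = 1 := by rw [← mul_conj, hconj]; linear_combination hdet
    exact_mod_cast h
  have him : u.im ≠ 0 := fun h0 ↦ hne <| mul_left_cancel₀ hc <| by
    linear_combination (conj_eq_iff_im.mpr h0).symm.trans hconj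
  have ha : a * (p - 1 : ℝ) = u * p - conj u := by rw [hconj]; push_cast; ring
  have hp : (p - 1) ^ 2 ≠ 0 := pow_ne_zero 2 <| sub_ne_zero.mpr fun h ↦ hne (by simp [h])
  calc ‖a‖ = 1 ↔ normSq a * (p - 1) ^ 2 = 1 * (p - 1) ^ 2 := by
        rw [mul_left_inj' hp, normSq_eq_norm_sq,
          pow_eq_one_iff_of_nonneg (norm_nonneg a) two_ne_zero]
    _ ↔ normSq (a * (p - 1 : ℝ)) = normSq u * (p - 1) ^ 2 := by
        rw [normSq_mul, normSq_ofReal, hnormSq, sq]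
    _ ↔ 4 * p * u.im ^ 2 = 0 := by rw [ha, normSq_mul_ofReal_sub_conj, add_eq_left]
    _ ↔ p = 0 := by simp [him]
end

section
/- Let $\gamma(z) = \frac{az+b}{cz+d}$ with $ad-bc=1$ be an elliptic Möbius transformation whose fixed point set is $\{1, p\}$ with $p$ real. Then $|a| < 1$ if and only if $p < 0$. -/
/-!
The fixed points `1, p` determine `b = -c p` and `d = a - c (1 + p)`, so the trace `s = a + d`
satisfies `s² - 4 = (c (1 - p))²`. Ellipticity makes `s` real and `w = c (1 - p)` purely
imaginary with `|w|² = 4 - s²`. Since `2 a (1 - p) = s (1 - p) + (1 + p) w` splits into real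
and imaginary parts, `4 |a|² (1 - p)² = s² (1 - p)² + (4 - s²) (1 + p)²`, that is
`(1 - p)² (|a|² - 1) = (4 - s²) p`, and `|a|² - 1` has the sign of `p`.
-/

section FixedPoints

variable {R : Type*} [CommRing R] {a b c d z₁ z₂ : R}

theorem eq_neg_mul_mul_of_fixedPoint_poly
    (h : ∀ z, c * z ^ 2 + (d - a) * z - b = c * (z - z₁) * (z - z₂)) :
    b = -(c * z₁ * z₂) := by
  linear_combination -h 0

theorem sub_eq_neg_mul_add_of_fixedPoint_poly
    (h : ∀ z, c * z ^ 2 + (d - a) * z - b = c * (z - z₁) * (z - z₂)) :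
    d - a = -(c * (z₁ + z₂)) := by
  linear_combination h 1 - h 0

theorem trace_sq_sub_four_mul_det_of_fixedPoint_poly
    (h : ∀ z, c * z ^ 2 + (d - a) * z - b = c * (z - z₁) * (z - z₂)) :
    (a + d) ^ 2 - 4 * (a * d - b * c) = (c * (z₁ - z₂)) ^ 2 := by
  linear_combination (d - a - c * (z₁ + z₂)) * sub_eq_neg_mul_add_of_fixedPoint_poly h
    + 4 * c * eq_neg_mul_mul_of_fixedPoint_poly h

end FixedPoints

namespace Complex

theorem exists_ofReal_of_sq_eq_ofReal {z : ℂ} {t : ℝ} (hz : z ^ 2 = t) (ht : 0 ≤ t) :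
    ∃ x : ℝ, z = x ∧ x ^ 2 = t := by
  have hre := congrArg re hz
  have him := congrArg im hz
  simp only [sq, mul_re, mul_im, ofReal_re, ofReal_im] at hre him
  have him_zero : z.im = 0 := by
    rcases mul_eq_zero.mp (by linarith : z.re * z.im = 0) with h | h
    · nlinarith [sq_nonneg z.im]
    · exact h
  exact ⟨z.re, ext rfl (by simpa using him_zero), by rw [← hre, him_zero]; ring⟩

theorem exists_mul_I_of_sq_eq_ofReal {z : ℂ} {t : ℝ} (hz : z ^ 2 = t) (ht : t ≤ 0) :
    ∃ y : ℝ, z = y * I ∧ y ^ 2 = -t := by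
  have hIz : (-(I * z)) ^ 2 = ((-t : ℝ) : ℂ) := by
    rw [neg_sq, mul_pow, I_sq, hz]; push_cast; ring
  obtain ⟨y, hy, hy_sq⟩ := exists_ofReal_of_sq_eq_ofReal hIz (neg_nonneg.mpr ht)
  refine ⟨y, ?_, hy_sq⟩
  linear_combination I * hy + z * I_sq

end Complex

open Complex in
theorem one_sub_sq_mul_normSq_sub_one_of_fixedPoint_poly {a b c d : ℂ} {p t : ℝ}
    (hdet : a * d - b * c = 1)
    (hroots : ∀ z : ℂ, c * z ^ 2 + (d - a) * z - b = c * (z - 1) * (z - p))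
    (ht : (a + d) ^ 2 = (t : ℂ)) (ht₀ : 0 ≤ t) (ht₄ : t ≤ 4) :
    (1 - p) ^ 2 * (normSq a - 1) = (4 - t) * p := by
  have hw : (c * (1 - p)) ^ 2 = ((t - 4 : ℝ) : ℂ) := by
    push_cast
    linear_combination (trace_sq_sub_four_mul_det_of_fixedPoint_poly hroots).symm + ht - 4 * hdet
  obtain ⟨x, hx, hx_sq⟩ := exists_ofReal_of_sq_eq_ofReal ht ht₀
  obtain ⟨y, hy, hy_sq⟩ := exists_mul_I_of_sq_eq_ofReal hw (by linarith)
  have hsplit :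
      2 * a * (1 - p) = ((x * (1 - p) : ℝ) : ℂ) + ((y * (1 + p) : ℝ) : ℂ) * I := by
    push_cast
    rw [← hx]
    linear_combination
      -(1 - (p : ℂ)) * sub_eq_neg_mul_add_of_fixedPoint_poly hroots + (1 + (p : ℂ)) * hy
  have hnormSq := congrArg normSq hsplit
  rw [normSq_add_mul_I, normSq_mul, normSq_mul, normSq_ofNat, ← ofReal_one, ← ofReal_sub,
    normSq_ofReal] at hnormSq
  linear_combination hnormSq / 4 + (1 - p) ^ 2 * hx_sq / 4 + (1 + p) ^ 2 * hy_sq / 4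

theorem elliptic_abs_lt_one_iff_fixed_point_neg_general
    (a b c d : ℂ) (p : ℝ)
    (hdet : a * d - b * c = 1)
    -- the fixed point equation `c z² + (d - a) z - b = 0` has root set `{1, p}`
    (hroots : ∀ z : ℂ, c * z ^ 2 + (d - a) * z - b = c * (z - 1) * (z - p))
    -- ellipticity: the square of the trace is a real number in `[0, 4)`
    (hell : ∃ t : ℝ, ((a + d) ^ 2 : ℂ) = (t : ℂ) ∧ 0 ≤ t ∧ t < 4) :
    ‖a‖ < 1 ↔ p < 0 := by
  obtain ⟨t, ht, ht₀, ht₄⟩ := hell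
  have key := one_sub_sq_mul_normSq_sub_one_of_fixedPoint_poly hdet hroots ht ht₀ ht₄.le
  have hp : 0 < (1 - p) ^ 2 := by
    refine pow_two_pos_of_ne_zero (sub_ne_zero.mpr ?_)
    -- at `p = 1` the identity `key` would force `t = 4`
    rintro rfl
    norm_num at key
    linarith
  calc ‖a‖ < 1 ↔ Complex.normSq a - 1 < 0 := by
        rw [sub_neg, ← Complex.sq_norm, sq_lt_one_iff₀ (norm_nonneg a)]
    _ ↔ (1 - p) ^ 2 * (Complex.normSq a - 1) < 0 :=
        (lt_iff_lt_of_le_iff_le (mul_nonneg_iff_of_pos_left hp)).symm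
    _ ↔ p < 0 := by
        rw [key]
        exact lt_iff_lt_of_le_iff_le (mul_nonneg_iff_of_pos_left (by linarith))

/-- Lemma (elliptic fixed points): let `γ(z) = (a z + b)/(c z + d)` with `a d - b c = 1`
be an elliptic Möbius transformation (`tr² = (a+d)² ∈ [0,4)`) whose fixed point set is
`{1, p}` with `p` real (the fixed points are the roots of `c z² + (d - a) z - b = 0`).
Then `|a| < 1 ↔ p < 0`. -/
theorem elliptic_abs_lt_one_iff_fixed_point_neg
    (a b c d : ℂ) (p : ℝ)
    (hdet : a * d - b * c = 1)
    (hc : c ≠ 0)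
    (hne : (p : ℂ) ≠ 1)
    -- the fixed point equation `c z² + (d - a) z - b = 0` has root set `{1, p}`
    (hroots : ∀ z : ℂ, c * z ^ 2 + (d - a) * z - b = c * (z - 1) * (z - p))
    -- ellipticity: the square of the trace is a real number in `[0, 4)`
    (hell : ∃ t : ℝ, ((a + d) ^ 2 : ℂ) = (t : ℂ) ∧ 0 ≤ t ∧ t < 4) :
    ‖a‖ < 1 ↔ p < 0 :=
  elliptic_abs_lt_one_iff_fixed_point_neg_general a b c d p hdet hroots hell
end
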